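/- Let L, c > 0, 0 < ξ < c, N ≥ 1, and h = L/(N+1). Let A_h be the (N+1)×(N+1) matrix equal to (c²/h²) times the tridiagonal matrix with diagonal entries 2 except the last diagonal entry 1 and off-diagonal entries −1, and let B be the (N+1)×(N+1) matrix whose only nonzero entry is B_{N+1,N+1} = −ξ/h. Let 𝒜_h^{FD}(ξ) be the 2(N+1)×2(N+1) block matrix with blocks [[0, I], [−A_h, B]]. Then every eigenvalue λ of 𝒜_h^{FD}(ξ) satisfies Re λ < 0. -/
import Mathlib

open Matrix

/-- The matrix (c²/h²) × tridiag(−1, 2, −1) of size n, with last diagonal entry 1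
instead of 2. -/
noncomputable def stiff (c h : ℝ) (n : ℕ) : Matrix (Fin n) (Fin n) ℝ :=
  Matrix.of fun i j =>
    (c^2/h^2) * (if i = j then (if (i:ℕ) = n - 1 then 1 else 2)
      else if (i:ℕ)+1 = (j:ℕ) ∨ (j:ℕ)+1 = (i:ℕ) then -1 else 0)

/-- The (N+1)×(N+1) matrix whose only nonzero entry is B_{N+1,N+1} = −ξ/h. -/
noncomputable def dampB (ξ h : ℝ) (N : ℕ) : Matrix (Fin (N+1)) (Fin (N+1)) ℝ :=
  Matrix.of fun i j => if (i:ℕ) = N ∧ (j:ℕ) = N then -ξ/h else 0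

/-- The 2(N+1)×2(N+1) first-order system matrix 𝒜_h^{FD}(ξ) = [[0, I], [−A_h, B]]. -/
noncomputable def sysFD (c h ξ : ℝ) (N : ℕ) :
    Matrix (Fin (N+1) ⊕ Fin (N+1)) (Fin (N+1) ⊕ Fin (N+1)) ℝ :=
  Matrix.fromBlocks 0 1 (-(stiff c h (N+1))) (dampB ξ h N)

section Aux
open Complex

noncomputable def Tmat (n : ℕ) : Matrix (Fin n) (Fin n) ℂ :=
  Matrix.of fun i j =>
    (if i = j then (if (i:ℕ) = n - 1 then 1 else 2)
      else if (i:ℕ)+1 = (j:ℕ) ∨ (j:ℕ)+1 = (i:ℕ) then -1 else 0)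

noncomputable def Bmat (n : ℕ) : Matrix (Fin n) (Fin n) ℂ :=
  Matrix.of fun i j => (if i = j then 1 else 0) - (if (j:ℕ)+1 = (i:ℕ) then 1 else 0)

lemma sumIdx {n : ℕ} (m : ℕ) (f : Fin n → ℂ) :
    (∑ j : Fin n, if m = (j:ℕ) then f j else 0) =
      if h : m < n then f ⟨m, h⟩ else 0 := by
  split_ifs with h
  · rw [Finset.sum_eq_single (⟨m, h⟩ : Fin n)]
    · simp
    · intro b _ hb
      rw [if_neg]
      intro hmb
      exact hb (by simp [Fin.ext_iff, ← hmb])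
    · simp
  · apply Finset.sum_eq_zero
    intro j _
    rw [if_neg]
    have := j.isLt
    omega

lemma Tmat_mulVec {n : ℕ} (u : Fin n → ℂ) (i : Fin n) :
    (Tmat n).mulVec u i =
      (if (i:ℕ) = n - 1 then 1 else 2) * u i
        - (if h : (i:ℕ)+1 < n then u ⟨(i:ℕ)+1, h⟩ else 0)
        - (if h : 0 < (i:ℕ) then u ⟨(i:ℕ)-1, by omega⟩ else 0) := by
  have key : ∀ j : Fin n, Tmat n i j * u j =
      (if (i:ℕ) = (j:ℕ) then (if (i:ℕ) = n-1 then (1:ℂ) else 2) * u j else 0)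
      - (if (i:ℕ)+1 = (j:ℕ) then u j else 0)
      - (if (j:ℕ)+1 = (i:ℕ) then u j else 0) := by
    intro j
    simp only [Tmat, Matrix.of_apply, Fin.ext_iff]
    split_ifs <;> first | omega | ring1
  show (∑ j, Tmat n i j * u j) = _
  rw [Finset.sum_congr rfl fun j _ => key j]
  rw [Finset.sum_sub_distrib, Finset.sum_sub_distrib, sumIdx, sumIdx]
  have h3 : (∑ j : Fin n, if (j:ℕ)+1 = (i:ℕ) then u j else 0)
      = if h : 0 < (i:ℕ) then u ⟨(i:ℕ)-1, by omega⟩ else 0 := by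
    split_ifs with h
    · have hc : ∀ j : Fin n, ((j:ℕ)+1 = (i:ℕ)) = ((i:ℕ)-1 = (j:ℕ)) := by
        intro j; apply propext; omega
      simp only [hc]
      rw [sumIdx, dif_pos (by omega : (i:ℕ)-1 < n)]
    · apply Finset.sum_eq_zero
      intro j _
      rw [if_neg]
      omega
  rw [h3, dif_pos i.isLt]

lemma Bmat_mulVec {n : ℕ} (u : Fin n → ℂ) (i : Fin n) :
    (Bmat n).mulVec u i =
      u i - (if h : 0 < (i:ℕ) then u ⟨(i:ℕ)-1, by omega⟩ else 0) := by
  have key : ∀ j : Fin n, Bmat n i j * u j =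
      (if (i:ℕ) = (j:ℕ) then u j else 0) - (if (j:ℕ)+1 = (i:ℕ) then u j else 0) := by
    intro j
    simp only [Bmat, Matrix.of_apply, Fin.ext_iff]
    split_ifs <;> first | omega | ring1
  show (∑ j, Bmat n i j * u j) = _
  rw [Finset.sum_congr rfl fun j _ => key j]
  rw [Finset.sum_sub_distrib, sumIdx, dif_pos i.isLt]
  have h3 : (∑ j : Fin n, if (j:ℕ)+1 = (i:ℕ) then u j else 0)
      = if h : 0 < (i:ℕ) then u ⟨(i:ℕ)-1, by omega⟩ else 0 := by
    split_ifs with h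
    · have hc : ∀ j : Fin n, ((j:ℕ)+1 = (i:ℕ)) = ((i:ℕ)-1 = (j:ℕ)) := by
        intro j; apply propext; omega
      simp only [hc]
      rw [sumIdx, dif_pos (by omega : (i:ℕ)-1 < n)]
    · apply Finset.sum_eq_zero
      intro j _
      rw [if_neg]
      omega
  rw [h3]

lemma sumIdx2 {n : ℕ} (a b : ℕ) :
    (∑ k : Fin n, if (a = (k:ℕ) ∧ b = (k:ℕ)) then (1:ℂ) else 0)
      = if (a = b ∧ a < n) then 1 else 0 := by
  rcases eq_or_ne a b with hab | hab
  · subst hab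
    have hc : ∀ k : Fin n, ((a = (k:ℕ) ∧ a = (k:ℕ))) = (a = (k:ℕ)) := by
      intro k; apply propext; tauto
    simp only [hc]
    rw [sumIdx a (fun _ => (1:ℂ))]
    split_ifs with h1 h2 h3 <;> first | rfl | omega | tauto
  · rw [if_neg (by tauto)]
    apply Finset.sum_eq_zero
    intro k _
    rw [if_neg]
    omega

lemma ite_one_mul_ite_one (p q : Prop) [Decidable p] [Decidable q] :
    (if p then (1:ℂ) else 0) * (if q then (1:ℂ) else 0) = if p ∧ q then 1 else 0 := by
  split_ifs <;> first | tauto | norm_num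

lemma Tmat_eq (n : ℕ) : Tmat n = (Bmat n)ᴴ * Bmat n := by
  ext i j
  rw [Matrix.mul_apply]
  symm
  have hstar : ∀ k : Fin n, star (Bmat n k i)
      = (if (i:ℕ) = (k:ℕ) then (1:ℂ) else 0) - (if (i:ℕ)+1 = (k:ℕ) then 1 else 0) := by
    intro k
    simp only [Bmat, Matrix.of_apply, Fin.ext_iff]
    split_ifs <;> first | omega | simp | (norm_num; omega)
  have hB : ∀ k : Fin n, Bmat n k j
      = (if (j:ℕ) = (k:ℕ) then (1:ℂ) else 0) - (if (j:ℕ)+1 = (k:ℕ) then 1 else 0) := by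
    intro k
    simp only [Bmat, Matrix.of_apply, Fin.ext_iff]
    split_ifs <;> first | omega | norm_num
  have key : ∀ k : Fin n, star (Bmat n k i) * Bmat n k j
      = ((if ((i:ℕ) = (k:ℕ) ∧ (j:ℕ) = (k:ℕ)) then (1:ℂ) else 0)
        - (if ((i:ℕ) = (k:ℕ) ∧ (j:ℕ)+1 = (k:ℕ)) then 1 else 0))
        - ((if ((i:ℕ)+1 = (k:ℕ) ∧ (j:ℕ) = (k:ℕ)) then 1 else 0)
        - (if ((i:ℕ)+1 = (k:ℕ) ∧ (j:ℕ)+1 = (k:ℕ)) then 1 else 0)) := by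
    intro k
    rw [hstar k, hB k, sub_mul, mul_sub, mul_sub,
      ite_one_mul_ite_one, ite_one_mul_ite_one, ite_one_mul_ite_one, ite_one_mul_ite_one]
  calc (∑ k, (Bmat n)ᴴ i k * Bmat n k j)
      = ∑ k, star (Bmat n k i) * Bmat n k j := by
        apply Finset.sum_congr rfl
        intro k _
        rw [Matrix.conjTranspose_apply]
    _ = _ := by
        rw [Finset.sum_congr rfl fun k _ => key k]
        rw [Finset.sum_sub_distrib, Finset.sum_sub_distrib, Finset.sum_sub_distrib,
          sumIdx2, sumIdx2, sumIdx2, sumIdx2]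
        have hi := i.isLt
        have hj := j.isLt
        simp only [Tmat, Matrix.of_apply, Fin.ext_iff]
        split_ifs <;> first | omega | ring1 | norm_num

lemma Bmat_ker {n : ℕ} (u : Fin n → ℂ) (h : ∀ i, (Bmat n).mulVec u i = 0) :
    ∀ i, u i = 0 := by
  have key : ∀ k : ℕ, ∀ i : Fin n, (i:ℕ) = k → u i = 0 := by
    intro k
    induction k using Nat.strong_induction_on with
    | _ k IH =>
      intro i hik
      have h1 := h i
      rw [Bmat_mulVec] at h1
      by_cases h0 : 0 < (i:ℕ)
      · rw [dif_pos h0] at h1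
        have hprev : u ⟨(i:ℕ)-1, by omega⟩ = 0 :=
          IH ((i:ℕ)-1) (by omega) ⟨(i:ℕ)-1, by omega⟩ rfl
        rw [hprev, sub_zero] at h1
        exact h1
      · rw [dif_neg h0, sub_zero] at h1
        exact h1
  exact fun i => key (i:ℕ) i rfl

lemma Tmat_uc {n : ℕ} (μ : ℂ) (u : Fin n → ℂ)
    (hu : ∀ i, (Tmat n).mulVec u i = μ * u i)
    (hlast : ∀ i : Fin n, (i:ℕ) = n - 1 → u i = 0) : ∀ i, u i = 0 := by
  have key : ∀ d : ℕ, ∀ i : Fin n, n - 1 - (i:ℕ) = d → u i = 0 := by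
    intro d
    induction d using Nat.strong_induction_on with
    | _ d IH =>
      intro i hid
      rcases Nat.eq_zero_or_pos d with h0 | h0
      · exact hlast i (by have := i.isLt; omega)
      · have hin : (i:ℕ)+1 < n := by have := i.isLt; omega
        have h1 := hu ⟨(i:ℕ)+1, hin⟩
        rw [Tmat_mulVec] at h1
        have hi' : u ⟨(i:ℕ)+1, hin⟩ = 0 := IH (d-1) (by omega) _ (by simp; omega)
        have hsucc : (if h : ((⟨(i:ℕ)+1, hin⟩ : Fin n):ℕ)+1 < n
            then u ⟨((⟨(i:ℕ)+1, hin⟩ : Fin n):ℕ)+1, h⟩ else 0) = 0 := by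
          split_ifs with h2
          · exact IH (d-2) (by omega) _ (by simp; omega)
          · rfl
        rw [hsucc] at h1
        rw [hi'] at h1
        have hpred : (if h : 0 < ((⟨(i:ℕ)+1, hin⟩ : Fin n):ℕ)
            then u ⟨((⟨(i:ℕ)+1, hin⟩ : Fin n):ℕ)-1, by omega⟩ else 0) = u i := by
          rw [dif_pos (by simp)]
          exact congrArg u (Fin.ext (by simp))
        rw [hpred] at h1
        simp at h1
        exact h1
  exact fun i => key (n - 1 - (i:ℕ)) i rfl

lemma quadForm {n : ℕ} (u : Fin n → ℂ) :
    (∑ i, (starRingEnd ℂ) (u i) * ((Tmat n).mulVec u) i)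
      = ((∑ i, Complex.normSq (((Bmat n).mulVec u) i) : ℝ) : ℂ) := by
  have h1 : (∑ i, (starRingEnd ℂ) (u i) * ((Tmat n).mulVec u) i)
      = star u ⬝ᵥ ((Tmat n) *ᵥ u) := by
    simp [dotProduct, Pi.star_apply]
  rw [h1, Tmat_eq, ← Matrix.mulVec_mulVec, Matrix.dotProduct_mulVec, ← Matrix.star_mulVec]
  rw [Complex.ofReal_sum]
  simp only [dotProduct, Pi.star_apply]
  apply Finset.sum_congr rfl
  intro i _
  rw [Complex.normSq_eq_conj_mul_self]
  rfl

end Aux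

/-- every (complex) eigenvalue of 𝒜_h^{FD}(ξ) has negative real part. -/
theorem sysFD_eigenvalues_neg_re (L c ξ : ℝ) (hL : 0 < L) (hc : 0 < c)
    (hξ0 : 0 < ξ) (hξc : ξ < c) (N : ℕ) (hN : 1 ≤ N) :
    ∀ lam : ℂ, (∃ w : (Fin (N+1) ⊕ Fin (N+1)) → ℂ, w ≠ 0 ∧
        ((sysFD c (L/((N:ℝ)+1)) ξ N).map (fun x => (x:ℂ))).mulVec w = lam • w) →
      lam.re < 0 := by
  rintro lam ⟨w, hw0, heig⟩
  set h : ℝ := L / ((N:ℝ)+1) with hdef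
  have hhpos : 0 < h := div_pos hL (by positivity)
  have hκpos : 0 < c^2/h^2 := by positivity
  set u : Fin (N+1) → ℂ := fun i => w (Sum.inl i) with hudef
  set v : Fin (N+1) → ℂ := fun i => w (Sum.inr i) with hvdef
  have hw' : w = Sum.elim u v := by funext x; cases x <;> rfl
  have hstiff : (stiff c h (N+1)).map (fun x : ℝ => (x:ℂ))
      = ((c^2/h^2 : ℝ) : ℂ) • Tmat (N+1) := by
    ext i j
    simp only [Matrix.map_apply, stiff, Tmat, Matrix.of_apply, Matrix.smul_apply,
      smul_eq_mul]
    rw [Complex.ofReal_mul]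
    congr 1
    split_ifs <;> norm_num
  have hmap : (sysFD c h ξ N).map (fun x : ℝ => (x:ℂ))
      = Matrix.fromBlocks 0 1 (-(((c^2/h^2 : ℝ) : ℂ) • Tmat (N+1)))
          ((dampB ξ h N).map (fun x : ℝ => (x:ℂ))) := by
    rw [sysFD, Matrix.fromBlocks_map]
    have h0 : ((0 : Matrix (Fin (N+1)) (Fin (N+1)) ℝ)).map (fun x : ℝ => (x:ℂ)) = 0 := by
      ext i j; simp
    have h1 : ((1 : Matrix (Fin (N+1)) (Fin (N+1)) ℝ)).map (fun x : ℝ => (x:ℂ)) = 1 := by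
      ext i j
      simp [Matrix.one_apply, apply_ite (fun x : ℝ => (x:ℂ))]
    have hneg : ((-(stiff c h (N+1))).map (fun x : ℝ => (x:ℂ)))
        = -(((c^2/h^2 : ℝ) : ℂ) • Tmat (N+1)) := by
      rw [← hstiff]
      ext i j
      simp [Matrix.map_apply]
    rw [h0, h1, hneg]
  rw [hmap, hw', Matrix.fromBlocks_mulVec] at heig
  have hv_eq : ∀ i, v i = lam * u i := by
    intro i
    have h1 := congrFun heig (Sum.inl i)
    simpa using h1
  have hdampv : ∀ i : Fin (N+1), ((dampB ξ h N).map (fun x : ℝ => (x:ℂ))).mulVec v i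
      = if (i:ℕ) = N then ((-ξ/h : ℝ) : ℂ) * v (Fin.last N) else 0 := by
    intro i
    show (∑ j, ((dampB ξ h N).map (fun x : ℝ => (x:ℂ))) i j * v j) = _
    by_cases hi : (i:ℕ) = N
    · rw [if_pos hi]
      rw [Finset.sum_eq_single (Fin.last N)]
      · simp [dampB, Matrix.map_apply, hi]
      · intro b _ hb
        have hbn : ¬((i:ℕ) = N ∧ (b:ℕ) = N) := fun hh => hb (Fin.ext (by simp [hh.2]))
        simp [dampB, Matrix.map_apply, hbn]
      · simp
    · rw [if_neg hi]
      apply Finset.sum_eq_zero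
      intro j _
      simp [dampB, Matrix.map_apply, hi]
  have hrow : ∀ i : Fin (N+1),
      -(((c^2/h^2 : ℝ):ℂ) * ((Tmat (N+1)).mulVec u) i)
        + (if (i:ℕ) = N then ((-ξ/h : ℝ):ℂ) * v (Fin.last N) else 0) = lam * v i := by
    intro i
    have h1 := congrFun heig (Sum.inr i)
    simp only [Sum.elim_comp_inl, Sum.elim_comp_inr, Matrix.neg_mulVec,
      Matrix.smul_mulVec, Pi.add_apply, Pi.neg_apply, Pi.smul_apply,
      smul_eq_mul, Sum.elim_inr] at h1
    rw [hdampv i] at h1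
    exact h1
  set q : ℝ := ∑ i, Complex.normSq (((Bmat (N+1)).mulVec u) i) with hqdef
  set m : ℝ := ∑ i, Complex.normSq (u i) with hmdef
  set β : ℝ := (ξ/h) * Complex.normSq (u (Fin.last N)) with hβdef
  have hune : ¬ (∀ i, u i = 0) := by
    intro hz
    apply hw0
    funext x
    cases x with
    | inl i => exact hz i
    | inr i =>
        have : v i = 0 := by rw [hv_eq i, hz i, mul_zero]
        exact this
  have hm : 0 < m := by
    have hex : ∃ i, u i ≠ 0 := by
      by_contra hno
      push_neg at hno
      exact hune hno
    obtain ⟨i0, hi0⟩ := hex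
    rw [hmdef]
    apply Finset.sum_pos' (fun i _ => Complex.normSq_nonneg _)
    exact ⟨i0, Finset.mem_univ _, Complex.normSq_pos.mpr hi0⟩
  have hq : 0 ≤ q := Finset.sum_nonneg fun i _ => Complex.normSq_nonneg _
  have hβnn : 0 ≤ β := mul_nonneg (by positivity) (Complex.normSq_nonneg _)
  have main : lam^2 * (m:ℂ) + lam * (β:ℂ) + ((c^2/h^2 : ℝ):ℂ) * (q:ℂ) = 0 := by
    have hsum : (∑ i, (starRingEnd ℂ) (u i) *
          (-(((c^2/h^2 : ℝ):ℂ) * ((Tmat (N+1)).mulVec u) i)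
            + (if (i:ℕ) = N then ((-ξ/h : ℝ):ℂ) * v (Fin.last N) else 0)))
        = ∑ i, (starRingEnd ℂ) (u i) * (lam * v i) :=
      Finset.sum_congr rfl fun i _ => by rw [hrow i]
    have A1 : (∑ i, (starRingEnd ℂ) (u i) *
          (-(((c^2/h^2 : ℝ):ℂ) * ((Tmat (N+1)).mulVec u) i)))
        = -(((c^2/h^2 : ℝ):ℂ) * (q:ℂ)) := by
      have : ∀ i : Fin (N+1), (starRingEnd ℂ) (u i) *
            (-(((c^2/h^2 : ℝ):ℂ) * ((Tmat (N+1)).mulVec u) i))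
          = -(((c^2/h^2 : ℝ):ℂ) * ((starRingEnd ℂ) (u i) * ((Tmat (N+1)).mulVec u) i)) := by
        intro i; ring
      rw [Finset.sum_congr rfl fun i _ => this i]
      rw [Finset.sum_neg_distrib, ← Finset.mul_sum, quadForm u]
    have A2 : (∑ i, (starRingEnd ℂ) (u i) *
          (if (i:ℕ) = N then ((-ξ/h : ℝ):ℂ) * v (Fin.last N) else 0))
        = -(lam * (β:ℂ)) := by
      rw [Finset.sum_eq_single (Fin.last N)]
      · rw [if_pos (by simp)]
        rw [hv_eq (Fin.last N), hβdef]
        push_cast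
        rw [Complex.normSq_eq_conj_mul_self]
        ring
      · intro b _ hb
        rw [if_neg (fun hh => hb (Fin.ext (by simp [hh]))), mul_zero]
      · simp
    have A3 : (∑ i, (starRingEnd ℂ) (u i) * (lam * v i)) = lam^2 * (m:ℂ) := by
      have : ∀ i : Fin (N+1), (starRingEnd ℂ) (u i) * (lam * v i)
          = lam^2 * ((Complex.normSq (u i) : ℝ) : ℂ) := by
        intro i
        rw [hv_eq i, Complex.normSq_eq_conj_mul_self]
        ring
      rw [Finset.sum_congr rfl fun i _ => this i, ← Finset.mul_sum, hmdef]
      rw [Complex.ofReal_sum]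
    have hL2 : (∑ i, (starRingEnd ℂ) (u i) *
          (-(((c^2/h^2 : ℝ):ℂ) * ((Tmat (N+1)).mulVec u) i)
            + (if (i:ℕ) = N then ((-ξ/h : ℝ):ℂ) * v (Fin.last N) else 0)))
        = -(((c^2/h^2 : ℝ):ℂ) * (q:ℂ)) + -(lam * (β:ℂ)) := by
      simp only [mul_add]
      rw [Finset.sum_add_distrib, A1, A2]
    rw [hL2, A3] at hsum
    linear_combination -hsum
  rw [pow_two] at main
  have hre := congrArg Complex.re main
  have him := congrArg Complex.im main
  simp only [Complex.add_re, Complex.add_im, Complex.mul_re, Complex.mul_im,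
    Complex.ofReal_re, Complex.ofReal_im, Complex.zero_re, Complex.zero_im,
    mul_zero, zero_mul, sub_zero, add_zero, zero_add] at hre him
  by_contra hx
  push_neg at hx
  by_cases hy : lam.im = 0
  · rw [hy] at hre
    have hkq : (c^2/h^2) * q = 0 := by
      nlinarith [mul_nonneg (mul_nonneg hx hx) hm.le, mul_nonneg hx hβnn,
        mul_nonneg hκpos.le hq]
    have hq0 : q = 0 := by
      rcases mul_eq_zero.mp hkq with hcase | hcase
      · exact absurd hcase (ne_of_gt hκpos)
      · exact hcase
    have hBu : ∀ i, (Bmat (N+1)).mulVec u i = 0 := by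
      intro i
      have hsum0 : (∑ i, Complex.normSq (((Bmat (N+1)).mulVec u) i)) = 0 := by
        rw [← hqdef]; exact hq0
      have := (Finset.sum_eq_zero_iff_of_nonneg
        (fun j _ => Complex.normSq_nonneg _)).mp hsum0 i (Finset.mem_univ i)
      exact Complex.normSq_eq_zero.mp this
    exact hune (Bmat_ker u hBu)
  · have hkey : 2 * lam.re * m + β = 0 := by
      have hfac : lam.im * (2 * lam.re * m + β) = 0 := by linear_combination him
      exact (mul_eq_zero.mp hfac).resolve_left hy
    have hβ0 : β = 0 := by nlinarith [mul_nonneg hx hm.le]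
    have hulast : u (Fin.last N) = 0 := by
      have hns : Complex.normSq (u (Fin.last N)) = 0 := by
        have hξh : 0 < ξ/h := div_pos hξ0 hhpos
        have hmul : ξ/h * Complex.normSq (u (Fin.last N)) = 0 := by
          rw [← hβdef]; exact hβ0
        exact (mul_eq_zero.mp hmul).resolve_left (ne_of_gt hξh)
      exact Complex.normSq_eq_zero.mp hns
    have hvlast : v (Fin.last N) = 0 := by rw [hv_eq, hulast, mul_zero]
    have hκne : ((c^2/h^2 : ℝ) : ℂ) ≠ 0 := Complex.ofReal_ne_zero.mpr (ne_of_gt hκpos)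
    have hTu : ∀ i, (Tmat (N+1)).mulVec u i = (-(lam*lam)/((c^2/h^2 : ℝ):ℂ)) * u i := by
      intro i
      have h1 := hrow i
      rw [hvlast, mul_zero, ite_self, add_zero, hv_eq i] at h1
      apply mul_left_cancel₀ hκne
      have h2 : ((c^2/h^2:ℝ):ℂ) * ((-(lam*lam)/((c^2/h^2:ℝ):ℂ)) * u i)
          = -(lam*lam) * u i := by
        have hcne : (c:ℂ) ≠ 0 := Complex.ofReal_ne_zero.mpr (ne_of_gt hc)
        have hhne : (h:ℂ) ≠ 0 := Complex.ofReal_ne_zero.mpr (ne_of_gt hhpos)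
        field_simp
      rw [h2]
      linear_combination -h1
    have hz := Tmat_uc (-(lam*lam)/((c^2/h^2 : ℝ):ℂ)) u hTu (fun i hi => by
      have hieq : i = Fin.last N := Fin.ext (by simpa using hi)
      rw [hieq]; exact hulast)
    exact hune hz
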